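/- Let T be a quantum channel with full-rank fixed point σ, Ω a positive definite superoperator with Ω(monotonicity): ⟨T(A),Ω(T(A))⟩ ≤ ⟨A,Ω(A)⟩ for all A. Let s₁ be the second largest singular value of Q = Ω^{1/2}∘T∘Ω^{-1/2}. Then for any density matrix ρ and all n ≥ 0: ‖Tⁿ(ρ) - σ‖₁ ≤ s₁ⁿ √(χ²(ρ,σ)), where χ²(ρ,σ) = ⟨ρ-σ, Ω(ρ-σ)⟩, provided ‖X‖₁² ≤ ⟨X,Ω(X)⟩ holds for traceless Hermitian X. -/

import Mathlib

open Matrix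
open scoped ComplexOrder

/-- The trace norm `‖A‖₁ = tr √(A†A)` of a complex matrix. -/
noncomputable def traceNorm {d : ℕ} (A : Matrix (Fin d) (Fin d) ℂ) : ℝ :=
  (((Matrix.posSemidef_conjTranspose_mul_self A).isHermitian.eigenvectorUnitary.1 *
    diagonal (((↑) : ℝ → ℂ) ∘ (Real.sqrt ·) ∘ (Matrix.posSemidef_conjTranspose_mul_self A).isHermitian.eigenvalues) *
    (star (Matrix.posSemidef_conjTranspose_mul_self A).isHermitian.eigenvectorUnitary :
      Matrix (Fin d) (Fin d) ℂ)).trace).re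

/-- Hilbert–Schmidt norm `‖X‖_HS = √tr[X†X]`. -/
noncomputable def hsNorm {d : ℕ} (X : Matrix (Fin d) (Fin d) ℂ) : ℝ :=
  Real.sqrt (((Xᴴ * X).trace).re)

/-- A completely positive trace-preserving map (quantum channel), presented by
a Kraus decomposition `T(X) = ∑ μ, K μ * X * (K μ)ᴴ` with `∑ μ, (K μ)ᴴ * K μ = 1`. -/
def IsCPTP {d : ℕ} (T : Matrix (Fin d) (Fin d) ℂ →ₗ[ℂ] Matrix (Fin d) (Fin d) ℂ) : Prop :=
  ∃ (m : ℕ) (K : Fin m → Matrix (Fin d) (Fin d) ℂ),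
    (∀ X, T X = ∑ μ, K μ * X * (K μ)ᴴ) ∧ (∑ μ, (K μ)ᴴ * K μ = 1)

/-!
Conjugating by `R = Ω^{1/2}` turns `T` into a contraction `Q` of the Hilbert–Schmidt space
(monotonicity of the `Ω`-form) fixing `v = R σ`. A contraction and its adjoint have the same
fixed vectors, so `Q` maps `v^⊥` into itself, where it shrinks norms by `s₁`. Trace preservation
says that the trace functional, written as `⟪u, R ·⟫`, is `Q†`-invariant. When `s₁ < 1` the only
fixed vectors of `Q` (hence of `Q†`) are the multiples of `v`, so `u ∥ v` and `R (ρ - σ)`, on which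
the functional vanishes, lies in `v^⊥`. Then
`‖Tⁿ(ρ - σ)‖₁ ≤ ‖R Tⁿ(ρ - σ)‖₂ = ‖Qⁿ R (ρ - σ)‖₂ ≤ s₁ⁿ ‖R (ρ - σ)‖₂ = s₁ⁿ √χ²(ρ, σ)`.
When `s₁ ≥ 1` the contraction property alone suffices.
-/

open scoped InnerProductSpace

namespace ContinuousLinearMap

variable {𝕜 E : Type*} [RCLike 𝕜] [NormedAddCommGroup E] [InnerProductSpace 𝕜 E] [CompleteSpace E]
  {Q : E →L[𝕜] E} {v : E}

theorem adjoint_apply_eq_self_of_apply_eq_self (hQ : ‖Q‖ ≤ 1) (hv : Q v = v) : adjoint Q v = v := by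
  refine eq_of_norm_le_re_inner_eq_norm_sq (𝕜 := 𝕜) ?_ ?_
  · have hQ' : ‖adjoint Q‖ ≤ 1 := by rwa [LinearIsometryEquiv.norm_map]
    simpa using (adjoint Q).le_of_opNorm_le hQ' v
  · rw [adjoint_inner_left, hv, inner_self_eq_norm_sq]

theorem inner_apply_eq_of_apply_eq_self (hQ : ‖Q‖ ≤ 1) (hv : Q v = v) (x : E) :
    ⟪v, Q x⟫_𝕜 = ⟪v, x⟫_𝕜 := by
  rw [← adjoint_inner_left, adjoint_apply_eq_self_of_apply_eq_self hQ hv]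

omit [CompleteSpace E] in
theorem norm_pow_apply_le (hQ : ‖Q‖ ≤ 1) (n : ℕ) (x : E) : ‖(Q ^ n) x‖ ≤ ‖x‖ := by
  induction n generalizing x with
  | zero => simp
  | succ n ih => exact (ih (Q x)).trans (Q.le_of_opNorm_le hQ x |>.trans_eq (one_mul _))

section SpectralGap

variable {s : ℝ} (hgap : ∀ y, ⟪v, y⟫_𝕜 = 0 → ‖Q y‖ ≤ s * ‖y‖)
include hgap

theorem norm_pow_apply_le_of_inner_eq_zero (hs : 0 ≤ s) (hQ : ‖Q‖ ≤ 1) (hv : Q v = v) {x : E}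
    (hx : ⟪v, x⟫_𝕜 = 0) (n : ℕ) : ‖(Q ^ n) x‖ ≤ s ^ n * ‖x‖ := by
  induction n generalizing x with
  | zero => simp
  | succ n ih =>
    have hQx : ⟪v, Q x⟫_𝕜 = 0 := by rw [inner_apply_eq_of_apply_eq_self hQ hv, hx]
    calc ‖(Q ^ (n + 1)) x‖ = ‖(Q ^ n) (Q x)‖ := by rw [pow_succ, mul_apply_eq_comp]
      _ ≤ s ^ n * ‖Q x‖ := ih hQx
      _ ≤ s ^ n * (s * ‖x‖) := by gcongr; exact hgap x hx
      _ = s ^ (n + 1) * ‖x‖ := by ring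

omit [CompleteSpace E] in
theorem mem_span_singleton_of_apply_eq_self (hs : s < 1) (hv : Q v = v) {x : E} (hx : Q x = x) :
    x ∈ 𝕜 ∙ v := by
  set p := (𝕜 ∙ v).starProjection x
  have hp : p ∈ 𝕜 ∙ v := (𝕜 ∙ v).starProjection_apply_mem x
  have hQp : Q p = p := by
    obtain ⟨c, hc⟩ := Submodule.mem_span_singleton.mp hp
    rw [← hc, map_smul, hv]
  have hw : ⟪v, x - p⟫_𝕜 = 0 :=
    Submodule.mem_orthogonal_singleton_iff_inner_right.mp
      (Submodule.sub_starProjection_mem_orthogonal x)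
  have hQw : Q (x - p) = x - p := by rw [map_sub, hx, hQp]
  have hle : ‖x - p‖ ≤ s * ‖x - p‖ := by simpa only [hQw] using hgap _ hw
  have hxp : x - p = 0 := norm_eq_zero.mp (by nlinarith [norm_nonneg (x - p)])
  rwa [sub_eq_zero.mp hxp]

theorem norm_pow_apply_le_of_invariant_inner_eq_zero (hs : 0 ≤ s) (hQ : ‖Q‖ ≤ 1)
    (hv : Q v = v) {u : E} (hu : ∀ y, ⟪u, Q y⟫_𝕜 = ⟪u, y⟫_𝕜) (huv : ⟪u, v⟫_𝕜 ≠ 0) {x : E}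
    (hx : ⟪u, x⟫_𝕜 = 0) (n : ℕ) : ‖(Q ^ n) x‖ ≤ s ^ n * ‖x‖ := by
  rcases lt_or_ge s 1 with hs1 | hs1
  · have hu_adj : adjoint Q u = u := ext_inner_right 𝕜 fun y ↦ by rw [adjoint_inner_left, hu]
    have hQu : Q u = u := by
      simpa using
        adjoint_apply_eq_self_of_apply_eq_self (by rwa [LinearIsometryEquiv.norm_map]) hu_adj
    obtain ⟨c, rfl⟩ :=
      Submodule.mem_span_singleton.mp (mem_span_singleton_of_apply_eq_self hgap hs1 hv hQu)
    have hc : c ≠ 0 := by rintro rfl; simp at huv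
    refine norm_pow_apply_le_of_inner_eq_zero hgap hs hQ hv ?_ n
    simpa [inner_smul_left, hc] using hx
  · exact (norm_pow_apply_le hQ n x).trans (le_mul_of_one_le_left (norm_nonneg x) (one_le_pow₀ hs1))

end SpectralGap

end ContinuousLinearMap

namespace LinearEquiv

variable {𝕜 V E : Type*} [RCLike 𝕜] [AddCommGroup V] [Module 𝕜 V] [NormedAddCommGroup E]
  [InnerProductSpace 𝕜 E] [FiniteDimensional 𝕜 E] (J : V ≃ₗ[𝕜] E) (T : Module.End 𝕜 V)

theorem toContinuousLinearMap_conj_pow_apply (n : ℕ) (a : V) :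
    (LinearMap.toContinuousLinearMap (J.conj T) ^ n) (J a) = J ((T ^ n) a) := by
  induction n with
  | zero => simp
  | succ n ih => rw [pow_succ', pow_succ', mul_apply_eq_comp, Module.End.mul_apply, ih]; simp

theorem norm_apply_pow_apply_le_of_invariant_inner_eq_zero {σ : V} {s : ℝ} (hs : 0 ≤ s)
    (hcontr : ∀ a, ‖J (T a)‖ ≤ ‖J a‖) (hfix : T σ = σ)
    (hgap : ∀ a, ⟪J σ, J a⟫_𝕜 = 0 → ‖J (T a)‖ ≤ s * ‖J a‖) {u : E}
    (hu : ∀ a, ⟪u, J (T a)⟫_𝕜 = ⟪u, J a⟫_𝕜) (huσ : ⟪u, J σ⟫_𝕜 ≠ 0) {a : V} (ha : ⟪u, J a⟫_𝕜 = 0)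
    (n : ℕ) : ‖J ((T ^ n) a)‖ ≤ s ^ n * ‖J a‖ := by
  set Q := LinearMap.toContinuousLinearMap (J.conj T)
  have := FiniteDimensional.complete 𝕜 E
  have hQ : ∀ a, Q (J a) = J (T a) := fun a ↦ by simp [Q]
  have hQ_le : ‖Q‖ ≤ 1 := Q.opNorm_le_bound zero_le_one fun y ↦ by
    obtain ⟨b, rfl⟩ := J.surjective y
    rw [one_mul, hQ]
    exact hcontr b
  rw [← J.toContinuousLinearMap_conj_pow_apply]
  refine Q.norm_pow_apply_le_of_invariant_inner_eq_zero (fun y hy ↦ ?_) hs hQ_le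
    (by rw [hQ, hfix]) (fun y ↦ ?_) huσ ha n
  all_goals obtain ⟨b, rfl⟩ := J.surjective y; rw [hQ]
  exacts [hgap b hy, hu b]

end LinearEquiv

namespace Matrix

variable {𝕜 : Type*} [RCLike 𝕜] {m n : Type*}

noncomputable def toEuclideanSpace : Matrix m n 𝕜 ≃ₗ[𝕜] EuclideanSpace 𝕜 (m × n) :=
  (LinearEquiv.curry 𝕜 𝕜 m n).symm ≪≫ₗ (WithLp.linearEquiv 2 𝕜 (m × n → 𝕜)).symm

@[simp]
theorem toEuclideanSpace_apply (A : Matrix m n 𝕜) (p : m × n) : toEuclideanSpace A p = A p.1 p.2 :=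
  rfl

variable [Fintype n]

theorem inner_toEuclideanSpace (A B : Matrix n n 𝕜) :
    ⟪toEuclideanSpace A, toEuclideanSpace B⟫_𝕜 = (Aᴴ * B).trace := by
  simp only [PiLp.inner_apply, RCLike.inner_apply, toEuclideanSpace_apply, Fintype.sum_prod_type,
    trace, diag_apply, mul_apply, conjTranspose_apply]
  rw [Finset.sum_comm]
  exact Finset.sum_congr rfl fun _ _ ↦ Finset.sum_congr rfl fun _ _ ↦ mul_comm _ _

theorem re_trace_conjTranspose_mul_self (A : Matrix n n 𝕜) :
    RCLike.re (Aᴴ * A).trace = ‖toEuclideanSpace A‖ ^ 2 := by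
  rw [← inner_toEuclideanSpace, inner_self_eq_norm_sq]

theorem re_trace_conjTranspose_mul_apply {R Ω : Matrix n n 𝕜 →ₗ[𝕜] Matrix n n 𝕜}
    (hRsq : ∀ X, R (R X) = Ω X) (hRsa : ∀ X Y, ((R X)ᴴ * Y).trace = (Xᴴ * R Y).trace)
    (A : Matrix n n 𝕜) : RCLike.re (Aᴴ * Ω A).trace = ‖toEuclideanSpace (R A)‖ ^ 2 := by
  rw [← hRsq, ← hRsa, re_trace_conjTranspose_mul_self]

theorem trace_eq_inner_toEuclideanSpace [DecidableEq n] {R : Matrix n n 𝕜 →ₗ[𝕜] Matrix n n 𝕜}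
    (hRsa : ∀ X Y, ((R X)ᴴ * Y).trace = (Xᴴ * R Y).trace) {B : Matrix n n 𝕜} (hB : R B = 1)
    (A : Matrix n n 𝕜) : A.trace = ⟪toEuclideanSpace B, toEuclideanSpace (R A)⟫_𝕜 := by
  rw [inner_toEuclideanSpace, ← hRsa, hB, conjTranspose_one, one_mul]

end Matrix

theorem hsNorm_eq_norm {d : ℕ} (A : Matrix (Fin d) (Fin d) ℂ) :
    hsNorm A = ‖Matrix.toEuclideanSpace A‖ := by
  rw [hsNorm, ← RCLike.re_to_complex, Matrix.re_trace_conjTranspose_mul_self,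
    Real.sqrt_sq (norm_nonneg _)]

theorem traceNorm_nonneg {d : ℕ} (A : Matrix (Fin d) (Fin d) ℂ) : 0 ≤ traceNorm A := by
  have hD : (diagonal (((↑) : ℝ → ℂ) ∘ (Real.sqrt ·) ∘
      (posSemidef_conjTranspose_mul_self A).isHermitian.eigenvalues)).PosSemidef :=
    PosSemidef.diagonal fun i ↦ Complex.zero_le_real.mpr (Real.sqrt_nonneg _)
  exact (Complex.nonneg_iff.mp (hD.mul_mul_conjTranspose_same _).trace_nonneg).1

namespace IsCPTP

variable {d : ℕ} {T : Matrix (Fin d) (Fin d) ℂ →ₗ[ℂ] Matrix (Fin d) (Fin d) ℂ}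

theorem trace_apply (hT : IsCPTP T) (A : Matrix (Fin d) (Fin d) ℂ) : (T A).trace = A.trace := by
  obtain ⟨m, K, hK, hK1⟩ := hT
  simp_rw [hK, trace_sum, trace_mul_cycle _ A, ← trace_sum, ← Finset.sum_mul, hK1, one_mul]

theorem conjTranspose_apply (hT : IsCPTP T) (A : Matrix (Fin d) (Fin d) ℂ) : (T A)ᴴ = T Aᴴ := by
  obtain ⟨m, K, hK, -⟩ := hT
  simp [hK, conjTranspose_sum, conjTranspose_mul, Matrix.mul_assoc]

theorem trace_pow_apply (hT : IsCPTP T) (n : ℕ) (A : Matrix (Fin d) (Fin d) ℂ) :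
    ((T ^ n) A).trace = A.trace := by
  induction n with
  | zero => rfl
  | succ n ih => rw [pow_succ', Module.End.mul_apply, hT.trace_apply, ih]

theorem isHermitian_pow_apply (hT : IsCPTP T) {A : Matrix (Fin d) (Fin d) ℂ} (hA : A.IsHermitian)
    (n : ℕ) : ((T ^ n) A).IsHermitian := by
  induction n with
  | zero => exact hA
  | succ n ih => rw [pow_succ', Module.End.mul_apply, IsHermitian, hT.conjTranspose_apply, ih.eq]

end IsCPTP

/-- Mixing time bound: Let `T` be a quantum channel with full-rank fixed
point `σ`, `Ω` a positive definite superoperator with Hermitian square root `R`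
(`R ∘ R = Ω`, inverse `Rinv`) satisfying the monotonicity
`⟨T(A), Ω(T(A))⟩ ≤ ⟨A, Ω(A)⟩` and the trace-norm bound `‖X‖₁² ≤ ⟨X, Ω(X)⟩` for traceless
Hermitian `X`. Let `s₁` bound the singular values of `Q = R ∘ T ∘ Rinv` on the
orthogonal complement of the top singular vector `R(σ)` (i.e. `s₁` is the second largest
singular value of `Q`). Then for every density matrix `ρ` and all `n`,
`‖Tⁿ(ρ) - σ‖₁ ≤ s₁ⁿ √(χ²(ρ,σ))` with `χ²(ρ,σ) = ⟨ρ-σ, Ω(ρ-σ)⟩`. -/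
theorem mixing_time_bound (d : ℕ)
    (T Ω R Rinv : Matrix (Fin d) (Fin d) ℂ →ₗ[ℂ] Matrix (Fin d) (Fin d) ℂ)
    (σ ρ : Matrix (Fin d) (Fin d) ℂ) (s₁ : ℝ)
    (hT : IsCPTP T) (hσ : σ.PosDef) (hσtr : σ.trace = 1) (hfix : T σ = σ)
    (hρ : ρ.PosSemidef) (hρtr : ρ.trace = 1)
    (hRsq : ∀ X, R (R X) = Ω X)
    (hRsa : ∀ X Y, ((R X)ᴴ * Y).trace = (Xᴴ * R Y).trace)
    (hRinv₁ : ∀ X, R (Rinv X) = X) (hRinv₂ : ∀ X, Rinv (R X) = X)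
    (hmono : ∀ A, (((T A)ᴴ * Ω (T A)).trace).re ≤ ((Aᴴ * Ω A).trace).re)
    (htrb : ∀ X : Matrix (Fin d) (Fin d) ℂ, X.IsHermitian → X.trace = 0 →
      traceNorm X ^ 2 ≤ ((Xᴴ * Ω X).trace).re)
    (hs₁ : 0 ≤ s₁)
    (hsv : ∀ B, ((R σ)ᴴ * B).trace = 0 → hsNorm (R (T (Rinv B))) ≤ s₁ * hsNorm B) :
    ∀ n : ℕ, traceNorm ((T ^ n) (ρ - σ)) ≤
      s₁ ^ n * Real.sqrt ((((ρ - σ)ᴴ * Ω (ρ - σ)).trace).re) := by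
  intro n
  let J := LinearEquiv.ofLinearMap R Rinv (LinearMap.ext hRinv₁) (LinearMap.ext hRinv₂) ≪≫ₗ
    toEuclideanSpace
  have hquad : ∀ A, ((Aᴴ * Ω A).trace).re = ‖J A‖ ^ 2 := re_trace_conjTranspose_mul_apply hRsq hRsa
  have htr : ∀ A, A.trace = ⟪toEuclideanSpace (Rinv 1), J A⟫_ℂ :=
    trace_eq_inner_toEuclideanSpace hRsa (hRinv₁ 1)
  have hXtr : (ρ - σ).trace = 0 := by rw [trace_sub, hρtr, hσtr, sub_self]
  have hdecay : ‖J ((T ^ n) (ρ - σ))‖ ≤ s₁ ^ n * ‖J (ρ - σ)‖ := by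
    refine J.norm_apply_pow_apply_le_of_invariant_inner_eq_zero T hs₁
      (fun A ↦ (sq_le_sq₀ (norm_nonneg _) (norm_nonneg _)).mp (by simpa only [hquad] using hmono A))
      hfix (fun A hA ↦ ?_) (fun A ↦ by rw [← htr, ← htr, hT.trace_apply])
      (by rw [← htr, hσtr]; exact one_ne_zero) (by rw [← htr, hXtr]) n
    simpa [hRinv₂, hsNorm_eq_norm, J] using hsv (R A) (by rwa [← inner_toEuclideanSpace])
  have htn : traceNorm ((T ^ n) (ρ - σ)) ≤ ‖J ((T ^ n) (ρ - σ))‖ := by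
    rw [← sq_le_sq₀ (traceNorm_nonneg _) (norm_nonneg _), ← hquad]
    exact htrb _ (hT.isHermitian_pow_apply (hρ.isHermitian.sub hσ.isHermitian) n)
      (by rw [hT.trace_pow_apply, hXtr])
  rw [hquad, Real.sqrt_sq (norm_nonneg _)]
  exact htn.trans hdecay
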